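/- For every k ≥ 1, the ℓ¹ Lie norm of the k-th Lie Magnus commutator is bounded by (1/k) times the ℓ¹ norm of the k-th Magnus commutator: ‖μ_k^Lie(X_1,…,X_k)‖ ≤ (1/k) · |μ_k(X_1,…,X_k)|_{ℓ¹}. (Dynkin–Specht–Wever bound; equivalently Θ_k^Lie ≤ Θ_k / k.) -/

import Mathlib

open scoped Classical BigOperators

noncomputable section

/-- Number of descents of a permutation of `Fin k`:
`des σ = #{1 ≤ i ≤ k−1 : σ(i) > σ(i+1)}`. -/
def descents {k : ℕ} (σ : Equiv.Perm (Fin k)) : ℕ :=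
  (Finset.univ.filter fun i : Fin k =>
    ∃ h : (i : ℕ) + 1 < k, σ ⟨(i : ℕ) + 1, h⟩ < σ i).card

/-- Number of ascents of a permutation of `Fin k`: `asc σ = (k−1) − des σ`. -/
def ascents {k : ℕ} (σ : Equiv.Perm (Fin k)) : ℕ := (k - 1) - descents σ

/-- The `k`-th Magnus commutator in the free associative algebra
(Mielnik–Plebański formula):
`μ_k(X_1,…,X_k) = Σ_{σ ∈ S_k} (−1)^{des σ} (asc σ)!(des σ)!/k! · X_{σ(1)} ⋯ X_{σ(k)}`. -/
def magnus (R : Type*) [Field R] (k : ℕ) : FreeAlgebra R (Fin k) :=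
  ∑ σ : Equiv.Perm (Fin k),
    ((-1 : R) ^ descents σ * ((ascents σ).factorial : R) * ((descents σ).factorial : R) /
        (k.factorial : R)) •
      (List.ofFn fun i : Fin k => FreeAlgebra.ι R (σ i)).prod

/-- Right-nested Lie bracket of a list: `[a₁,…,aₖ] ↦ ⁅a₁, ⁅a₂, ⁅…, aₖ⁆…⁆⁆`. -/
def rightBracket {L : Type*} [LieRing L] : List L → L
  | [] => 0
  | [a] => a
  | a :: (b :: rest) => ⁅a, rightBracket (b :: rest)⁆

/-- The `k`-th Lie Magnus commutator (Dynkin form):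
`μ_k^Lie = Σ_{σ ∈ S_k} (−1)^{des σ} (asc σ)!(des σ)!/(k!·k) ·
  ⁅X_{σ(1)}, ⁅…, ⁅X_{σ(k−1)}, X_{σ(k)}⁆…⁆⁆`. -/
def magnusLie (R : Type*) [Field R] (k : ℕ) : FreeLieAlgebra R (Fin k) :=
  ∑ σ : Equiv.Perm (Fin k),
    ((-1 : R) ^ descents σ * ((ascents σ).factorial : R) * ((descents σ).factorial : R) /
        ((k.factorial : R) * (k : R))) •
      rightBracket (List.ofFn fun i : Fin k => FreeLieAlgebra.of R (σ i))

/-- Lie monomials: the smallest subset of the free Lie algebra containing the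
canonical generators and closed under the Lie bracket. -/
inductive IsLieMonomial {R : Type*} [CommRing R] {X : Type*} : FreeLieAlgebra R X → Prop
  | of (x : X) : IsLieMonomial (FreeLieAlgebra.of R x)
  | bracket {a b : FreeLieAlgebra R X} : IsLieMonomial a → IsLieMonomial b →
      IsLieMonomial ⁅a, b⁆

/-- The ℓ¹ Lie norm: infimum of `Σᵢ |cᵢ|` over all finite presentations
`u = Σᵢ cᵢ • mᵢ` with real coefficients `cᵢ` and Lie monomials `mᵢ`. -/
def lieL1Norm {X : Type*} (u : FreeLieAlgebra ℝ X) : ℝ :=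
  sInf { s : ℝ | ∃ (n : ℕ) (c : Fin n → ℝ) (m : Fin n → FreeLieAlgebra ℝ X),
    (∀ i, IsLieMonomial (m i)) ∧ u = ∑ i, c i • m i ∧ s = ∑ i, |c i| }

/-- The ℓ¹ norm on the free associative algebra: the sum of the absolute values of
the coefficients in the basis of words in the generators. -/
def algL1Norm {X : Type*} (u : FreeAlgebra ℝ X) : ℝ :=
  (FreeAlgebra.equivMonoidAlgebraFreeMonoid u).coeff.sum fun _ c => |c|

/-!
Both Magnus commutators carry the same coefficients `c_σ = magnusCoeff ℝ σ`: `μ_k` puts `c_σ` on the word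
`X_{σ(1)} ⋯ X_{σ(k)}`, and `μ_k^Lie` puts `c_σ / k` on the right-nested bracket of the same letters,
which is a Lie monomial. Distinct permutations give distinct words, so `|μ_k|_{ℓ¹} = Σ_σ |c_σ|`,
while the Dynkin presentation itself is admissible in the infimum defining `‖μ_k^Lie‖`, whence
`‖μ_k^Lie‖ ≤ Σ_σ |c_σ| / k`.
-/

theorem FreeAlgebra.equivMonoidAlgebraFreeMonoid_prod_map_ι {R X : Type*} [CommSemiring R]
    (l : List X) :
    FreeAlgebra.equivMonoidAlgebraFreeMonoid ((l.map (FreeAlgebra.ι R)).prod) =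
      MonoidAlgebra.single (FreeMonoid.ofList l) 1 := by
  rw [← FreeMonoid.lift_ofList, ← AlgEquiv.eq_symm_apply]
  simp [FreeAlgebra.equivMonoidAlgebraFreeMonoid]

theorem Finsupp.sum_sum_single_of_injective {α ι M N : Type*} [Fintype ι] [AddCommMonoid M]
    [AddCommMonoid N] {w : ι → α} (hw : Function.Injective w) (c : ι → M) (h : α → M → N)
    (h_zero : ∀ a, h a 0 = 0) :
    (∑ i, Finsupp.single (w i) (c i)).sum h = ∑ i, h (w i) (c i) := by
  have hmap : ∑ i, Finsupp.single (w i) (c i) =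
      Finsupp.mapDomain w (Finsupp.equivFunOnFinite.symm c) := by
    rw [Finsupp.mapDomain, Finsupp.sum_fintype] <;> simp
  rw [hmap, Finsupp.sum_mapDomain_index_inj hw, Finsupp.sum_fintype] <;> simp [h_zero]

theorem algL1Norm_sum_smul_prod_map_ι {X ι : Type*} [Fintype ι] {w : ι → List X}
    (hw : Function.Injective w) (c : ι → ℝ) :
    algL1Norm (∑ i, c i • ((w i).map (FreeAlgebra.ι ℝ)).prod) = ∑ i, |c i| := by
  simp only [algL1Norm, map_sum, map_smul, FreeAlgebra.equivMonoidAlgebraFreeMonoid_prod_map_ι,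
    MonoidAlgebra.smul_single', mul_one, MonoidAlgebra.coeff_sum, MonoidAlgebra.coeff_single]
  exact Finsupp.sum_sum_single_of_injective (FreeMonoid.ofList.injective.comp hw) c _
    fun _ => abs_zero

theorem IsLieMonomial.rightBracket {R X : Type*} [CommRing R] :
    ∀ {l : List (FreeLieAlgebra R X)}, l ≠ [] → (∀ a ∈ l, IsLieMonomial a) →
      IsLieMonomial (rightBracket l)
  | [a], _, h => h a (List.mem_singleton_self a)
  | a :: b :: t, _, h =>
      .bracket (h a List.mem_cons_self)
        (IsLieMonomial.rightBracket (List.cons_ne_nil b t) fun x hx =>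
          h x (List.mem_cons_of_mem _ hx))

theorem lieL1Norm_sum_smul_le {X ι : Type*} [Fintype ι] (c : ι → ℝ)
    {m : ι → FreeLieAlgebra ℝ X} (hm : ∀ i, IsLieMonomial (m i)) :
    lieL1Norm (∑ i, c i • m i) ≤ ∑ i, |c i| := by
  let e := (Fintype.equivFin ι).symm
  refine csInf_le ⟨0, ?_⟩ ⟨Fintype.card ι, c ∘ e, m ∘ e, fun i => hm (e i), ?_, ?_⟩
  · rintro _ ⟨n, c, m, -, -, rfl⟩
    exact Finset.sum_nonneg fun i _ => abs_nonneg (c i)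
  · exact (e.sum_comp fun i => c i • m i).symm
  · exact (e.sum_comp fun i => |c i|).symm

def magnusCoeff (R : Type*) [Field R] {k : ℕ} (σ : Equiv.Perm (Fin k)) : R :=
  (-1 : R) ^ descents σ * ((ascents σ).factorial : R) * ((descents σ).factorial : R) /
    (k.factorial : R)

theorem magnus_eq_sum (R : Type*) [Field R] (k : ℕ) :
    magnus R k = ∑ σ : Equiv.Perm (Fin k),
      magnusCoeff R σ • ((List.ofFn σ).map (FreeAlgebra.ι R)).prod := by
  simp only [magnus, magnusCoeff, List.map_ofFn, Function.comp_def]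

theorem magnusLie_eq_sum (R : Type*) [Field R] (k : ℕ) :
    magnusLie R k = ∑ σ : Equiv.Perm (Fin k),
      (magnusCoeff R σ / k) • rightBracket (List.ofFn fun i => FreeLieAlgebra.of R (σ i)) := by
  simp only [magnusLie, magnusCoeff, div_div]

theorem algL1Norm_magnus (k : ℕ) :
    algL1Norm (magnus ℝ k) = ∑ σ : Equiv.Perm (Fin k), |magnusCoeff ℝ σ| := by
  rw [magnus_eq_sum]
  exact algL1Norm_sum_smul_prod_map_ι (List.ofFn_injective.comp DFunLike.coe_injective) _

theorem isLieMonomial_rightBracket_ofFn {R X : Type*} [CommRing R] {k : ℕ} (hk : 1 ≤ k)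
    (x : Fin k → X) :
    IsLieMonomial (rightBracket (List.ofFn fun i => FreeLieAlgebra.of R (x i))) := by
  refine IsLieMonomial.rightBracket ?_ ?_
  · simpa [List.ofFn_eq_nil_iff] using Nat.one_le_iff_ne_zero.mp hk
  · simp only [List.mem_ofFn]
    rintro _ ⟨i, rfl⟩
    exact .of (x i)

/-- Dynkin–Specht–Wever bound: `‖μ_k^Lie‖_{ℓ¹} ≤ (1/k)·|μ_k|_{ℓ¹}`. -/
theorem lieL1Norm_magnusLie_le (k : ℕ) (hk : 1 ≤ k) :
    lieL1Norm (magnusLie ℝ k) ≤ (1 / (k : ℝ)) * algL1Norm (magnus ℝ k) :=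
  calc lieL1Norm (magnusLie ℝ k)
      ≤ ∑ σ : Equiv.Perm (Fin k), |magnusCoeff ℝ σ / k| := by
        rw [magnusLie_eq_sum]
        exact lieL1Norm_sum_smul_le _ fun σ => isLieMonomial_rightBracket_ofFn hk σ
    _ = (1 / (k : ℝ)) * algL1Norm (magnus ℝ k) := by
        rw [algL1Norm_magnus, Finset.mul_sum]
        simp only [abs_div, Nat.abs_cast, one_div_mul_eq_div]

end
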